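/- Let F : F_2^n → F_2^n be an APN function, a ∈ F_2^n nonzero, λ ∈ F_2, and w = |{x ∈ F_2^n : a·F(x) = λ}|. Then there exists a Sidon set of size 2^n − w in F_2^{2n−1}. -/

import Mathlib

def IsSidon {G : Type*} [AddCommGroup G] (M : Set G) : Prop :=
  ∀ m₁ ∈ M, ∀ m₂ ∈ M, ∀ m₃ ∈ M, ∀ m₄ ∈ M,
    m₁ ≠ m₂ → m₁ ≠ m₃ → m₁ ≠ m₄ → m₂ ≠ m₃ → m₂ ≠ m₄ → m₃ ≠ m₄ →
      m₁ + m₂ + m₃ + m₄ ≠ 0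

def IsAPN {n : ℕ} (F : (Fin n → ZMod 2) → (Fin n → ZMod 2)) : Prop :=
  ∀ a : Fin n → ZMod 2, a ≠ 0 → ∀ b : Fin n → ZMod 2,
    (Finset.univ.filter (fun x => F x + F (x + a) = b)).card ≤ 2

def dot {t : ℕ} (a b : Fin t → ZMod 2) : ZMod 2 := ∑ i, a i * b i

/-!
The graph `{(x, F x)}` of an APN function is a Sidon set in `𝔽₂ⁿ × 𝔽₂ⁿ`: four distinct points
summing to zero would give four solutions `x₁, x₂, x₃, x₄` of `F x + F (x + u) = b` with
`u = x₁ + x₂`. The `2ⁿ - w` graph points with `a · y = λ + 1` lie in an affine hyperplane. In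
characteristic 2 a translation preserves Sidon sets (the four copies of the translation vector
cancel), so they give a Sidon set in the linear hyperplane `a · y = 0`, which is isomorphic
to `𝔽₂^(2n-1)`.
-/

open Function Module

section Sidon

variable {G H : Type*} [AddCommGroup G] [AddCommGroup H]

theorem IsSidon.mono {M M' : Set G} (hM : IsSidon M) (hM' : M' ⊆ M) : IsSidon M' :=
  fun m₁ h₁ m₂ h₂ m₃ h₃ m₄ h₄ ↦ hM m₁ (hM' h₁) m₂ (hM' h₂) m₃ (hM' h₃) m₄ (hM' h₄)

theorem IsSidon.preimage_add [Module (ZMod 2) H] {M : Set H} (hM : IsSidon M) {g : G →+ H}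
    (hg : Injective g) (v : H) : IsSidon {x | g x + v ∈ M} := by
  intro x₁ h₁ x₂ h₂ x₃ h₃ x₄ h₄ h12 h13 h14 h23 h24 h34 hsum
  refine hM _ h₁ _ h₂ _ h₃ _ h₄ (by simpa [hg.eq_iff]) (by simpa [hg.eq_iff])
    (by simpa [hg.eq_iff]) (by simpa [hg.eq_iff]) (by simpa [hg.eq_iff]) (by simpa [hg.eq_iff]) ?_
  have hv : v + v + v + v = 0 := by simp [ZModModule.add_self]
  calc g x₁ + v + (g x₂ + v) + (g x₃ + v) + (g x₄ + v)
      = g (x₁ + x₂ + x₃ + x₄) + (v + v + v + v) := by simp only [map_add]; abel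
    _ = 0 := by rw [hsum, hv, map_zero, add_zero]

end Sidon

section Hyperplane

variable {W : Type*} [AddCommGroup W] [Module (ZMod 2) W] [FiniteDimensional (ZMod 2) W]

theorem IsSidon.exists_card_eq_of_forall_apply_eq {d : ℕ} (hW : finrank (ZMod 2) W = d + 1)
    {ℓ : Dual (ZMod 2) W} (hℓ : ℓ ≠ 0) {c : ZMod 2} {M : Finset W} (hM : IsSidon (M : Set W))
    (hMc : ∀ m ∈ M, ℓ m = c) :
    ∃ N : Finset (Fin d → ZMod 2), IsSidon (N : Set (Fin d → ZMod 2)) ∧ N.card = M.card := by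
  classical
  obtain ⟨v, hv⟩ := ℓ.surjective hℓ c
  have e : LinearMap.ker ℓ ≃ₗ[ZMod 2] (Fin d → ZMod 2) := LinearEquiv.ofFinrankEq _ _ <| by
    have := ℓ.finrank_ker_add_one_of_ne_zero hℓ
    rw [finrank_fin_fun]
    omega
  let g : (Fin d → ZMod 2) →+ W := ((LinearMap.ker ℓ).subtype ∘ₗ e.symm.toLinearMap).toAddMonoidHom
  have hg : Injective g := Subtype.val_injective.comp e.symm.injective
  have hinj : Injective (g · + v) := fun x y h ↦ hg (add_right_cancel h)
  refine ⟨M.preimage (g · + v) hinj.injOn, ?_, ?_⟩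
  · rw [Finset.coe_preimage]
    exact hM.preimage_add hg v
  · rw [Finset.card_preimage, Finset.filter_true_of_mem]
    intro m hm
    have hker : m - v ∈ LinearMap.ker ℓ := by simp [hMc m hm, hv]
    exact ⟨e ⟨m - v, hker⟩, by simp [g]⟩

end Hyperplane

section APN

variable {n : ℕ} {F : (Fin n → ZMod 2) → (Fin n → ZMod 2)}

theorem IsAPN.add_add_add_ne_zero (hF : IsAPN F) {x₁ x₂ x₃ x₄ : Fin n → ZMod 2}
    (h12 : x₁ ≠ x₂) (h13 : x₁ ≠ x₃) (h14 : x₁ ≠ x₄) (h23 : x₂ ≠ x₃) (h24 : x₂ ≠ x₄)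
    (h34 : x₃ ≠ x₄) (hx : x₁ + x₂ + x₃ + x₄ = 0) : F x₁ + F x₂ + F x₃ + F x₄ ≠ 0 := by
  intro hFx
  have hcard : ({x₁, x₂, x₃, x₄} : Finset _).card = 4 := by simp [*]
  have eq_of_add_eq_zero {y z : Fin n → ZMod 2} (h : y + z = 0) : y = z := by
    rwa [← ZModModule.sub_eq_add, sub_eq_zero] at h
  have h₁ : x₁ + (x₁ + x₂) = x₂ := by
    rw [← add_assoc, ZModModule.add_self, zero_add]
  have h₂ : x₂ + (x₁ + x₂) = x₁ := by
    rw [add_comm x₁, ← add_assoc, ZModModule.add_self, zero_add]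
  have h₃ : x₃ + (x₁ + x₂) = x₄ := eq_of_add_eq_zero (by rw [← hx]; abel)
  have h₄ : x₄ + (x₁ + x₂) = x₃ := eq_of_add_eq_zero (by rw [← hx]; abel)
  have hF₃₄ : F x₃ + F x₄ = F x₁ + F x₂ := eq_of_add_eq_zero (by rw [← hFx]; abel)
  have hu : x₁ + x₂ ≠ 0 := by
    rwa [← ZModModule.sub_eq_add, sub_ne_zero]
  have hsol : {x₁, x₂, x₃, x₄} ⊆
      Finset.univ.filter (fun x ↦ F x + F (x + (x₁ + x₂)) = F x₁ + F x₂) := by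
    intro x hx
    simp only [Finset.mem_insert, Finset.mem_singleton] at hx
    simp only [Finset.mem_filter, Finset.mem_univ, true_and]
    rcases hx with rfl | rfl | rfl | rfl
    · rw [h₁]
    · rw [h₂, add_comm]
    · rw [h₃, hF₃₄]
    · rw [h₄, add_comm, hF₃₄]
  have := (Finset.card_le_card hsol).trans (hF _ hu _)
  omega

theorem IsAPN.isSidon_graph (hF : IsAPN F) : IsSidon (Set.range fun x ↦ (x, F x)) := by
  rintro _ ⟨x₁, rfl⟩ _ ⟨x₂, rfl⟩ _ ⟨x₃, rfl⟩ _ ⟨x₄, rfl⟩ h12 h13 h14 h23 h24 h34 hsum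
  simp only [Prod.mk_add_mk, Prod.mk_eq_zero] at hsum
  have ne_of_graph_ne {x y} (h : (x, F x) ≠ (y, F y)) : x ≠ y := fun hxy ↦ h (by rw [hxy])
  exact hF.add_add_add_ne_zero (ne_of_graph_ne h12) (ne_of_graph_ne h13) (ne_of_graph_ne h14)
    (ne_of_graph_ne h23) (ne_of_graph_ne h24) (ne_of_graph_ne h34) hsum.1 hsum.2

end APN

theorem stmt_15_general {n : ℕ} (F : (Fin n → ZMod 2) → (Fin n → ZMod 2))
    (hF : IsAPN F) (a : Fin n → ZMod 2) (ha : a ≠ 0) (lam : ZMod 2) :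
    ∃ N : Finset (Fin (2 * n - 1) → ZMod 2),
      IsSidon (N : Set (Fin (2 * n - 1) → ZMod 2)) ∧
      N.card = 2 ^ n - (Finset.univ.filter (fun x => dot a (F x) = lam)).card := by
  have hn : n ≠ 0 := by rintro rfl; exact ha (Subsingleton.elim _ _)
  let ℓ : Dual (ZMod 2) ((Fin n → ZMod 2) × (Fin n → ZMod 2)) :=
    dotProductBilin (ZMod 2) (ZMod 2) a ∘ₗ LinearMap.snd _ _ _
  have hℓ : ℓ ≠ 0 := by
    obtain ⟨i, hi⟩ := Function.ne_iff.mp ha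
    exact fun h ↦ hi (by simpa [ℓ] using LinearMap.congr_fun h (0, Pi.single i 1))
  have hdim : finrank (ZMod 2) ((Fin n → ZMod 2) × (Fin n → ZMod 2)) = 2 * n - 1 + 1 := by
    rw [finrank_prod, finrank_fin_fun]; omega
  set S := Finset.univ.filter (fun x ↦ ¬ dot a (F x) = lam)
  have hS : ∀ x ∈ S, ℓ (x, F x) = lam + 1 := fun x hx ↦
    (by decide : ∀ s l : ZMod 2, s ≠ l → s = l + 1) _ _ (Finset.mem_filter.mp hx).2
  have hM : IsSidon (↑(S.image fun x ↦ (x, F x)) : Set ((Fin n → ZMod 2) × (Fin n → ZMod 2))) :=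
    hF.isSidon_graph.mono (by simp)
  obtain ⟨N, hN, hNcard⟩ :=
    hM.exists_card_eq_of_forall_apply_eq hdim hℓ (Finset.forall_mem_image.mpr hS)
  refine ⟨N, hN, ?_⟩
  have hsplit : (Finset.univ.filter (fun x ↦ dot a (F x) = lam)).card + S.card = 2 ^ n := by
    rw [Finset.card_filter_add_card_filter_not]
    simp
  rw [hNcard, Finset.card_image_of_injective _ (fun x y h ↦ congrArg Prod.fst h)]
  omega

theorem stmt_15 {n : ℕ} (hn : 1 ≤ n) (F : (Fin n → ZMod 2) → (Fin n → ZMod 2))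
    (hF : IsAPN F) (a : Fin n → ZMod 2) (ha : a ≠ 0) (lam : ZMod 2) :
    ∃ N : Finset (Fin (2 * n - 1) → ZMod 2),
      IsSidon (N : Set (Fin (2 * n - 1) → ZMod 2)) ∧
      N.card = 2 ^ n - (Finset.univ.filter (fun x => dot a (F x) = lam)).card :=
  stmt_15_general F hF a ha lam
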